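/- Let a = ‖u‖_{L²}, b = ‖v‖_{L²} with a, b > 0, and suppose ⟨u, v⟩ ≤ a·b (Cauchy–Schwarz). Then for 0 ≤ β < 1, ⟨u/a^β − v/b^β, u − v⟩ ≥ (a − b)(a^{1−β} − b^{1−β}) ≥ 0, i.e., the map u ↦ u/‖u‖^β is monotone on an inner product space. -/

import Mathlib

/-! The inner product expands to `p‖u‖² + q‖v‖² - (p + q)⟪u, v⟫`; bounding `⟪u, v⟫` by
Cauchy–Schwarz turns it into `(‖u‖ - ‖v‖)(p‖u‖ - q‖v‖)`, and with `p = ‖u‖^(-β)`,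
`q = ‖v‖^(-β)` this is `(a - b)(a^(1-β) - b^(1-β))`, nonnegative since `t ↦ t^(1-β)` is
monotone. -/

open RealInnerProductSpace

theorem norm_sub_norm_mul_le_inner_smul_sub_smul {H : Type*} [NormedAddCommGroup H]
    [InnerProductSpace ℝ H] (u v : H) {p q : ℝ} (hpq : 0 ≤ p + q) :
    (‖u‖ - ‖v‖) * (p * ‖u‖ - q * ‖v‖) ≤ ⟪p • u - q • v, u - v⟫ := by
  have hexpand : ⟪p • u - q • v, u - v⟫ = p * ‖u‖ ^ 2 + q * ‖v‖ ^ 2 - (p + q) * ⟪u, v⟫ := by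
    simp only [inner_sub_left, inner_sub_right, real_inner_smul_left,
      real_inner_self_eq_norm_sq, real_inner_comm u v]
    ring
  rw [hexpand]
  nlinarith [mul_le_mul_of_nonneg_left (real_inner_le_norm u v) hpq]

theorem Real.inv_rpow_mul_self {a β : ℝ} (ha : 0 ≤ a) (hβ : β ≠ 1) :
    (a ^ β)⁻¹ * a = a ^ (1 - β) := by
  rw [Real.rpow_sub' ha (sub_ne_zero.mpr hβ.symm), Real.rpow_one, inv_mul_eq_div]

theorem Real.sub_mul_rpow_sub_rpow_nonneg {a b r : ℝ} (ha : 0 ≤ a) (hb : 0 ≤ b) (hr : 0 ≤ r) :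
    0 ≤ (a - b) * (a ^ r - b ^ r) := by
  rcases le_total a b with hab | hab
  · exact mul_nonneg_of_nonpos_of_nonpos (sub_nonpos.mpr hab)
      (sub_nonpos.mpr (Real.rpow_le_rpow ha hab hr))
  · exact mul_nonneg (sub_nonneg.mpr hab) (sub_nonneg.mpr (Real.rpow_le_rpow hb hab hr))

theorem stmt_1_general {H : Type*} [NormedAddCommGroup H] [InnerProductSpace ℝ H]
    (u v : H) (a b β : ℝ) (ha : a = ‖u‖) (hb : b = ‖v‖)
    (hβ1 : β < 1) :
    (a - b) * (a ^ (1 - β) - b ^ (1 - β)) ≤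
      inner ℝ ((a ^ β)⁻¹ • u - (b ^ β)⁻¹ • v) (u - v) ∧
    (0 : ℝ) ≤ (a - b) * (a ^ (1 - β) - b ^ (1 - β)) := by
  have ha0 : 0 ≤ a := ha ▸ norm_nonneg u
  have hb0 : 0 ≤ b := hb ▸ norm_nonneg v
  refine ⟨?_, Real.sub_mul_rpow_sub_rpow_nonneg ha0 hb0 (by linarith)⟩
  have key := norm_sub_norm_mul_le_inner_smul_sub_smul u v
    (add_nonneg (inv_nonneg.mpr (Real.rpow_nonneg ha0 β)) (inv_nonneg.mpr (Real.rpow_nonneg hb0 β)))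
  rwa [← ha, ← hb, Real.inv_rpow_mul_self ha0 hβ1.ne, Real.inv_rpow_mul_self hb0 hβ1.ne] at key

theorem stmt_1 {H : Type*} [NormedAddCommGroup H] [InnerProductSpace ℝ H]
    (u v : H) (a b β : ℝ) (ha : a = ‖u‖) (hb : b = ‖v‖)
    (hapos : 0 < a) (hbpos : 0 < b)
    (hCS : inner ℝ u v ≤ a * b) (hβ0 : 0 ≤ β) (hβ1 : β < 1) :
    (a - b) * (a ^ (1 - β) - b ^ (1 - β)) ≤
      inner ℝ ((a ^ β)⁻¹ • u - (b ^ β)⁻¹ • v) (u - v) ∧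
    (0 : ℝ) ≤ (a - b) * (a ^ (1 - β) - b ^ (1 - β)) :=
  stmt_1_general u v a b β ha hb hβ1
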